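/- The logarithmic mean LMTD(x,y) = (x − y)/(ln x − ln y) (with LMTD(x,x)=x) is a concave function on the open positive quadrant {(x,y) : x > 0, y > 0}. -/

import Mathlib

/-!
The logarithmic mean is an average of weighted geometric means:
`L(x, y) = ∫₀¹ x ^ s * y ^ (1 - s) ds`. For each `s ∈ [0, 1]` the weighted geometric mean is
concave on the positive quadrant (by weighted AM-GM it lies below its tangent planes), and an
integral of concave functions is concave.
-/

open Real Set MeasureTheory

noncomputable def LMTD (x y : ℝ) : ℝ :=
  if x = y then x else (x - y) / (Real.log x - Real.log y)

theorem concaveOn_integral {α E : Type*} [MeasurableSpace α] [AddCommGroup E] [Module ℝ E]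
    {μ : Measure α} {S : Set E} {f : α → E → ℝ} (hS : Convex ℝ S)
    (hf : ∀ᵐ t ∂μ, ConcaveOn ℝ S (f t)) (hint : ∀ p ∈ S, Integrable (f · p) μ) :
    ConcaveOn ℝ S fun p => ∫ t, f t p ∂μ := by
  refine ⟨hS, fun p hp q hq a b ha hb hab => ?_⟩
  have hp' : Integrable (fun t => a • f t p) μ := (hint p hp).smul a
  have hq' : Integrable (fun t => b • f t q) μ := (hint q hq).smul b
  dsimp only
  rw [← integral_smul, ← integral_smul, ← integral_add hp' hq']
  refine integral_mono_ae (hp'.add hq') (hint _ (hS hp hq ha hb hab)) ?_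
  filter_upwards [hf] with t ht using ht.2 hp hq ha hb hab

/-- The weighted geometric mean lies below its tangent plane at `(X, Y)`. -/
theorem rpow_mul_rpow_one_sub_le {s X Y u v : ℝ} (hs₀ : 0 ≤ s) (hs₁ : s ≤ 1)
    (hX : 0 < X) (hY : 0 < Y) (hu : 0 ≤ u) (hv : 0 ≤ v) :
    u ^ s * v ^ (1 - s) ≤ (s * (u / X) + (1 - s) * (v / Y)) * (X ^ s * Y ^ (1 - s)) := by
  have amgm := geom_mean_le_arith_mean2_weighted hs₀ (sub_nonneg.2 hs₁)
    (div_nonneg hu hX.le) (div_nonneg hv hY.le) (add_sub_cancel s 1)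
  rw [div_rpow hu hX.le, div_rpow hv hY.le] at amgm
  calc u ^ s * v ^ (1 - s)
      = u ^ s / X ^ s * (v ^ (1 - s) / Y ^ (1 - s)) * (X ^ s * Y ^ (1 - s)) := by
        field_simp
    _ ≤ _ := by gcongr

theorem concaveOn_rpow_mul_rpow_one_sub {s : ℝ} (hs₀ : 0 ≤ s) (hs₁ : s ≤ 1) :
    ConcaveOn ℝ (Ioi 0 ×ˢ Ioi 0) fun p : ℝ × ℝ => p.1 ^ s * p.2 ^ (1 - s) := by
  have hconv : Convex ℝ (Ioi (0 : ℝ) ×ˢ Ioi (0 : ℝ)) := (convex_Ioi 0).prod (convex_Ioi 0)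
  refine ⟨hconv, ?_⟩
  rintro ⟨x₁, y₁⟩ hp₁ ⟨x₂, y₂⟩ hp₂ a b ha hb hab
  obtain ⟨hX, hY⟩ := hconv hp₁ hp₂ ha hb hab
  obtain ⟨hx₁ : 0 < x₁, hy₁ : 0 < y₁⟩ := hp₁
  obtain ⟨hx₂ : 0 < x₂, hy₂ : 0 < y₂⟩ := hp₂
  simp only [Prod.smul_mk, Prod.mk_add_mk, smul_eq_mul, mem_Ioi] at hX hY ⊢
  set X := a * x₁ + b * x₂
  set Y := a * y₁ + b * y₂
  have h₁ := rpow_mul_rpow_one_sub_le hs₀ hs₁ hX hY hx₁.le hy₁.le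
  have h₂ := rpow_mul_rpow_one_sub_le hs₀ hs₁ hX hY hx₂.le hy₂.le
  calc a * (x₁ ^ s * y₁ ^ (1 - s)) + b * (x₂ ^ s * y₂ ^ (1 - s))
      ≤ a * ((s * (x₁ / X) + (1 - s) * (y₁ / Y)) * (X ^ s * Y ^ (1 - s)))
        + b * ((s * (x₂ / X) + (1 - s) * (y₂ / Y)) * (X ^ s * Y ^ (1 - s))) := by gcongr
    _ = (s * (X / X) + (1 - s) * (Y / Y)) * (X ^ s * Y ^ (1 - s)) := by ring
    _ = X ^ s * Y ^ (1 - s) := by rw [div_self hX.ne', div_self hY.ne']; ring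

theorem integral_exp_mul (a b : ℝ) {c : ℝ} (hc : c ≠ 0) :
    ∫ s in a..b, exp (s * c) = (exp (b * c) - exp (a * c)) / c := by
  rw [intervalIntegral.integral_comp_mul_right exp hc, integral_exp, smul_eq_mul, inv_mul_eq_div]

theorem rpow_mul_rpow_one_sub_eq {x y : ℝ} (hx : 0 < x) (hy : 0 < y) (s : ℝ) :
    x ^ s * y ^ (1 - s) = y * exp (s * (log x - log y)) := by
  rw [rpow_def_of_pos hx, rpow_def_of_pos hy, ← exp_add]
  conv_rhs => arg 1; rw [← exp_log hy]
  rw [← exp_add]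
  ring_nf

theorem LMTD_eq_integral {x y : ℝ} (hx : 0 < x) (hy : 0 < y) :
    LMTD x y = ∫ s in (0 : ℝ)..1, x ^ s * y ^ (1 - s) := by
  simp_rw [rpow_mul_rpow_one_sub_eq hx hy, intervalIntegral.integral_const_mul]
  rcases eq_or_ne x y with rfl | hxy
  · simp [LMTD]
  · have hlog : log x - log y ≠ 0 := sub_ne_zero.2 fun h => hxy (log_injOn_pos hx hy h)
    rw [integral_exp_mul 0 1 hlog, one_mul, zero_mul, exp_zero, exp_sub, exp_log hx, exp_log hy,
      LMTD, if_neg hxy]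
    field_simp

theorem lmtd_concaveOn :
    ConcaveOn ℝ {p : ℝ × ℝ | 0 < p.1 ∧ 0 < p.2} (fun p => LMTD p.1 p.2) := by
  have hconc : ConcaveOn ℝ (Ioi (0 : ℝ) ×ˢ Ioi (0 : ℝ))
      fun p : ℝ × ℝ => ∫ s in Ioc (0 : ℝ) 1, p.1 ^ s * p.2 ^ (1 - s) := by
    refine concaveOn_integral ((convex_Ioi 0).prod (convex_Ioi 0)) ?_ ?_
    · exact (ae_restrict_iff' measurableSet_Ioc).2 <| ae_of_all _ fun s hs =>
        concaveOn_rpow_mul_rpow_one_sub hs.1.le hs.2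
    · rintro ⟨x, y⟩ ⟨hx : 0 < x, hy : 0 < y⟩
      have hcont : Continuous fun s : ℝ => x ^ s * y ^ (1 - s) := by
        fun_prop (disch := positivity)
      exact (hcont.intervalIntegrable 0 1).1
  refine hconc.congr fun p hp => ?_
  rw [LMTD_eq_integral hp.1 hp.2, intervalIntegral.integral_of_le zero_le_one]
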